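/- Let R > 0 and let p > 2 be a real number. Let u : [0,R] → ℝ be continuous on [0,R] and differentiable on (0,R), and suppose that the function ξ ↦ ξ|u'(ξ)|^p is integrable on (0,R). Then for all s, t ∈ [0,R] with s ≤ t, |u(t) − u(s)| ≤ ((p−1)/(p−2))^{(p−1)/p} (t−s)^{(p−2)/p} (∫₀^R ξ|u'(ξ)|^p dξ)^{1/p}. In particular, any such u is Hölder continuous on [0,R] with exponent (p−2)/p (the embedding W_1^{1,p}(0,R) ↪ C^{(p−2)/p}([0,R]) used in the two-dimensional case). -/

import Mathlib

/-!
By the fundamental theorem of calculus `|u t - u s| ≤ ∫ₛᵗ |u'|`. Splitting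
`|u'(ξ)| = ξ^(-1/p) · ξ^(1/p) |u'(ξ)|` and applying Hölder's inequality with exponents `p'`
and `p` bounds this by `(∫ₛᵗ ξ^(-1/(p-1)) dξ)^(1/p') (∫ ξ |u'|^p)^(1/p)`; the same
splitting shows that `u'` is integrable, so the fundamental theorem applies. For `p > 2` the
weight is `ξ^(a-1)` with `a = (p-2)/(p-1) ∈ (0, 1]`, and
`∫ₛᵗ ξ^(a-1) = (t^a - s^a)/a ≤ (t-s)^a/a` by subadditivity of `x ↦ x^a`. Raising to
the power `1/p' = (p-1)/p` gives the constant `((p-1)/(p-2))^((p-1)/p)` and the Hölder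
exponent `(p-2)/p`.
-/

open Real MeasureTheory Set

section WeightedHolder

variable {α : Type*} [MeasurableSpace α] {μ : Measure α}

lemma memLp_ofReal_of_integrable_rpow {g : α → ℝ} {r : ℝ} (hr : 0 < r)
    (hg : 0 ≤ᵐ[μ] g) (hgm : AEStronglyMeasurable g μ)
    (hi : Integrable (fun x => g x ^ r) μ) : MemLp g (ENNReal.ofReal r) μ := by
  rw [← integrable_norm_rpow_iff hgm (by simpa using hr) ENNReal.ofReal_ne_top,
    ENNReal.toReal_ofReal hr.le]
  refine hi.congr ?_
  filter_upwards [hg] with x hx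
  rw [Real.norm_of_nonneg hx]

variable {p : ℝ} {w f : α → ℝ}

lemma rpow_neg_inv_rpow_conjExponent (hp : 1 < p) {y : ℝ} (hy : 0 ≤ y) :
    (y ^ (-(1 / p))) ^ p.conjExponent = y ^ (-(1 / (p - 1))) := by
  rw [← Real.rpow_mul hy, Real.conjExponent]
  congr 1
  field_simp [(by linarith : p - 1 ≠ 0)]

lemma rpow_inv_mul_abs_rpow (hp : p ≠ 0) {y : ℝ} (hy : 0 ≤ y) (a : ℝ) :
    (y ^ (1 / p) * |a|) ^ p = y * |a| ^ p := by
  rw [Real.mul_rpow (Real.rpow_nonneg hy _) (abs_nonneg _), ← Real.rpow_mul hy,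
    one_div_mul_cancel hp, Real.rpow_one]

lemma memLp_rpow_neg_inv_of_integrable (hp : 1 < p) (hw : ∀ᵐ x ∂μ, 0 < w x)
    (hwm : AEStronglyMeasurable w μ) (hwi : Integrable (fun x => w x ^ (-(1 / (p - 1)))) μ) :
    MemLp (fun x => w x ^ (-(1 / p))) (ENNReal.ofReal p.conjExponent) μ := by
  refine memLp_ofReal_of_integrable_rpow (Real.HolderConjugate.conjExponent hp).symm.pos ?_
    (hwm.aemeasurable.pow_const _).aestronglyMeasurable (hwi.congr ?_)
  · filter_upwards [hw] with x hx
    exact Real.rpow_nonneg hx.le _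
  · filter_upwards [hw] with x hx
    exact (rpow_neg_inv_rpow_conjExponent hp hx.le).symm

lemma memLp_rpow_inv_mul_abs_of_integrable (hp : 0 < p) (hw : ∀ᵐ x ∂μ, 0 < w x)
    (hwm : AEStronglyMeasurable w μ) (hfm : AEStronglyMeasurable f μ)
    (hfi : Integrable (fun x => w x * |f x| ^ p) μ) :
    MemLp (fun x => w x ^ (1 / p) * |f x|) (ENNReal.ofReal p) μ := by
  refine memLp_ofReal_of_integrable_rpow hp ?_
    ((hwm.aemeasurable.pow_const _).aestronglyMeasurable.mul hfm.norm) (hfi.congr ?_)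
  · filter_upwards [hw] with x hx
    exact mul_nonneg (Real.rpow_nonneg hx.le _) (abs_nonneg _)
  · filter_upwards [hw] with x hx
    exact (rpow_inv_mul_abs_rpow hp.ne' hx.le (f x)).symm

lemma abs_eq_rpow_neg_inv_mul {y : ℝ} (hy : 0 < y) (a : ℝ) :
    |a| = y ^ (-(1 / p)) * (y ^ (1 / p) * |a|) := by
  rw [← mul_assoc, ← Real.rpow_add hy, neg_add_cancel, Real.rpow_zero, one_mul]

lemma integrable_of_integrable_weight_mul_abs_rpow (hp : 1 < p) (hw : ∀ᵐ x ∂μ, 0 < w x)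
    (hwm : AEStronglyMeasurable w μ) (hfm : AEStronglyMeasurable f μ)
    (hwi : Integrable (fun x => w x ^ (-(1 / (p - 1)))) μ)
    (hfi : Integrable (fun x => w x * |f x| ^ p) μ) : Integrable f μ := by
  have := (Real.HolderConjugate.conjExponent hp).symm.ennrealOfReal
  have hprod := (memLp_rpow_neg_inv_of_integrable hp hw hwm hwi).integrable_mul
    (memLp_rpow_inv_mul_abs_of_integrable (by linarith) hw hwm hfm hfi)
  exact hprod.mono' hfm (hw.mono fun x hx => (abs_eq_rpow_neg_inv_mul hx (f x)).le)

lemma integral_abs_le_weighted_holder (hp : 1 < p) (hw : ∀ᵐ x ∂μ, 0 < w x)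
    (hwm : AEStronglyMeasurable w μ) (hfm : AEStronglyMeasurable f μ)
    (hwi : Integrable (fun x => w x ^ (-(1 / (p - 1)))) μ)
    (hfi : Integrable (fun x => w x * |f x| ^ p) μ) :
    ∫ x, |f x| ∂μ ≤ (∫ x, w x ^ (-(1 / (p - 1))) ∂μ) ^ ((p - 1) / p) *
      (∫ x, w x * |f x| ^ p ∂μ) ^ (1 / p) := by
  have hpq := (Real.HolderConjugate.conjExponent hp).symm
  have hholder := integral_mul_le_Lp_mul_Lq_of_nonneg hpq
    (hw.mono fun x hx => Real.rpow_nonneg hx.le _)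
    (hw.mono fun x hx => mul_nonneg (Real.rpow_nonneg hx.le _) (abs_nonneg _))
    (memLp_rpow_neg_inv_of_integrable hp hw hwm hwi)
    (memLp_rpow_inv_mul_abs_of_integrable (by linarith) hw hwm hfm hfi)
  calc ∫ x, |f x| ∂μ = ∫ x, w x ^ (-(1 / p)) * (w x ^ (1 / p) * |f x|) ∂μ :=
        integral_congr_ae (hw.mono fun x hx => abs_eq_rpow_neg_inv_mul hx (f x))
    _ ≤ _ := hholder
    _ = _ := by
      rw [Real.conjExponent, one_div_div]
      congr 2 <;> refine integral_congr_ae (hw.mono fun x hx => ?_)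
      · exact rpow_neg_inv_rpow_conjExponent hp hx.le
      · exact rpow_inv_mul_abs_rpow (by linarith) hx.le (f x)

end WeightedHolder

lemma integral_Ioo_rpow_sub_one_le {a s t : ℝ} (ha : 0 < a) (ha1 : a ≤ 1) (hs : 0 ≤ s)
    (hst : s ≤ t) : ∫ x in Ioo s t, x ^ (a - 1) ≤ (t - s) ^ a / a := by
  have hsub : t ^ a ≤ (t - s) ^ a + s ^ a := by
    simpa using Real.rpow_add_le_add_rpow (sub_nonneg.2 hst) hs ha.le ha1
  rw [← integral_Ioc_eq_integral_Ioo, ← intervalIntegral.integral_of_le hst,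
    integral_rpow (Or.inl (by linarith)), sub_add_cancel]
  gcongr
  linarith

lemma abs_sub_le_integral_abs_deriv {u u' : ℝ → ℝ} {s t : ℝ} (hst : s ≤ t)
    (hu : ContinuousOn u (Icc s t)) (hderiv : ∀ x ∈ Ioo s t, HasDerivAt u (u' x) x)
    (hi : IntegrableOn u' (Ioo s t)) : |u t - u s| ≤ ∫ x in Ioo s t, |u' x| := by
  rw [← integral_Ioc_eq_integral_Ioo, ← intervalIntegral.integral_of_le hst,
    ← intervalIntegral.integral_eq_sub_of_hasDerivAt_of_le hst hu hderiv
      ((intervalIntegrable_iff_integrableOn_Ioo_of_le hst).2 hi)]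
  exact intervalIntegral.abs_integral_le_integral_abs hst

lemma setIntegral_mul_abs_rpow_nonneg {f : ℝ → ℝ} {p s t : ℝ} (hs : 0 ≤ s) :
    0 ≤ ∫ x in Ioo s t, x * |f x| ^ p :=
  setIntegral_nonneg measurableSet_Ioo fun _ hx =>
    mul_nonneg (hs.trans hx.1.le) (Real.rpow_nonneg (abs_nonneg _) _)

theorem abs_sub_le_of_integrableOn_mul_abs_deriv_rpow {p s t : ℝ} (hp : 2 < p) (hs : 0 ≤ s)
    (hst : s ≤ t) {u u' : ℝ → ℝ} (hu : ContinuousOn u (Icc s t))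
    (hderiv : ∀ x ∈ Ioo s t, HasDerivAt u (u' x) x)
    (hint : IntegrableOn (fun x => x * |u' x| ^ p) (Ioo s t)) :
    |u t - u s| ≤ ((p - 1) / (p - 2)) ^ ((p - 1) / p) * (t - s) ^ ((p - 2) / p) *
      (∫ x in Ioo s t, x * |u' x| ^ p) ^ (1 / p) := by
  set a := (p - 2) / (p - 1) with ha_def
  have ha : 0 < a := div_pos (by linarith) (by linarith)
  have ha1 : a ≤ 1 := (div_le_one (by linarith)).2 (by linarith)
  have hexp : -(1 / (p - 1)) = a - 1 := by
    rw [ha_def]; field_simp [(by linarith : p - 1 ≠ 0)]; ring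
  have hpos : ∀ᵐ x ∂volume.restrict (Ioo s t), 0 < x :=
    (ae_restrict_mem measurableSet_Ioo).mono fun x hx => hs.trans_lt hx.1
  have hu'm : AEStronglyMeasurable u' (volume.restrict (Ioo s t)) :=
    (aestronglyMeasurable_deriv u _).congr <|
      (ae_restrict_mem measurableSet_Ioo).mono fun x hx => (hderiv x hx).deriv
  have hweight : IntegrableOn (fun x : ℝ => x ^ (-(1 / (p - 1)))) (Ioo s t) := by
    rw [← intervalIntegrable_iff_integrableOn_Ioo_of_le hst]
    exact intervalIntegral.intervalIntegrable_rpow' (by rw [hexp]; linarith)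
  have hweight_le : ∫ x in Ioo s t, x ^ (-(1 / (p - 1))) ≤ (t - s) ^ a / a := by
    rw [hexp]; exact integral_Ioo_rpow_sub_one_le ha ha1 hs hst
  calc |u t - u s| ≤ ∫ x in Ioo s t, |u' x| :=
        abs_sub_le_integral_abs_deriv hst hu hderiv
          (integrable_of_integrable_weight_mul_abs_rpow (by linarith) hpos
            aestronglyMeasurable_id hu'm hweight hint)
    _ ≤ _ := integral_abs_le_weighted_holder (by linarith) hpos aestronglyMeasurable_id hu'm
        hweight hint
    _ ≤ ((t - s) ^ a / a) ^ ((p - 1) / p) * (∫ x in Ioo s t, x * |u' x| ^ p) ^ (1 / p) := by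
        refine mul_le_mul_of_nonneg_right (Real.rpow_le_rpow ?_ hweight_le ?_)
          (Real.rpow_nonneg (setIntegral_mul_abs_rpow_nonneg hs) _)
        · exact setIntegral_nonneg measurableSet_Ioo fun x hx =>
            Real.rpow_nonneg (hs.trans hx.1.le) _
        · exact div_nonneg (by linarith) (by linarith)
    _ = _ := by
        have hts : 0 ≤ t - s := sub_nonneg.2 hst
        rw [div_eq_mul_inv, Real.mul_rpow (Real.rpow_nonneg hts _) (inv_nonneg.2 ha.le),
          ← Real.rpow_mul hts, ha_def, inv_div, mul_comm ((t - s) ^ _)]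
        congr 3
        field_simp [(by linarith : p - 1 ≠ 0)]

lemma abs_sub_le_mul_abs_sub_rpow_of_le {f : ℝ → ℝ} {S : Set ℝ} {C a : ℝ}
    (h : ∀ s ∈ S, ∀ t ∈ S, s ≤ t → |f t - f s| ≤ C * (t - s) ^ a) :
    ∀ s ∈ S, ∀ t ∈ S, |f t - f s| ≤ C * |t - s| ^ a := by
  intro s hs t ht
  rcases le_total s t with hst | hts
  · rw [abs_of_nonneg (sub_nonneg.2 hst)]
    exact h s hs t ht hst
  · rw [abs_sub_comm (f t), abs_sub_comm t, abs_of_nonneg (sub_nonneg.2 hts)]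
    exact h t ht s hs hts

theorem stmt17_general (R p : ℝ) (hp : 2 < p)
    (u u' : ℝ → ℝ) (hu : ContinuousOn u (Set.Icc 0 R))
    (hderiv : ∀ ξ ∈ Set.Ioo (0:ℝ) R, HasDerivAt u (u' ξ) ξ)
    (hint : IntegrableOn (fun ξ => ξ * |u' ξ| ^ p) (Set.Ioo 0 R)) :
    (∀ s ∈ Set.Icc (0:ℝ) R, ∀ t ∈ Set.Icc (0:ℝ) R, s ≤ t →
      |u t - u s| ≤ ((p - 1) / (p - 2)) ^ ((p - 1) / p) * (t - s) ^ ((p - 2) / p) *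
        (∫ ξ in Set.Ioo (0:ℝ) R, ξ * |u' ξ| ^ p) ^ (1 / p))
    ∧ ∃ C : ℝ, 0 ≤ C ∧ ∀ s ∈ Set.Icc (0:ℝ) R, ∀ t ∈ Set.Icc (0:ℝ) R,
        |u t - u s| ≤ C * |t - s| ^ ((p - 2) / p) := by
  set E := ∫ ξ in Ioo (0:ℝ) R, ξ * |u' ξ| ^ p
  set K := ((p - 1) / (p - 2)) ^ ((p - 1) / p)
  have hK : 0 ≤ K := Real.rpow_nonneg (div_nonneg (by linarith) (by linarith)) _
  have hestimate : ∀ s ∈ Icc (0:ℝ) R, ∀ t ∈ Icc (0:ℝ) R, s ≤ t →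
      |u t - u s| ≤ K * (t - s) ^ ((p - 2) / p) * E ^ (1 / p) := by
    intro s hs t ht hst
    have hsub : Ioo s t ⊆ Ioo 0 R := Ioo_subset_Ioo hs.1 ht.2
    calc |u t - u s|
        ≤ K * (t - s) ^ ((p - 2) / p) * (∫ ξ in Ioo s t, ξ * |u' ξ| ^ p) ^ (1 / p) :=
          abs_sub_le_of_integrableOn_mul_abs_deriv_rpow hp hs.1 hst
            (hu.mono (Icc_subset_Icc hs.1 ht.2)) (fun x hx => hderiv x (hsub hx))
            (hint.mono_set hsub)
      _ ≤ K * (t - s) ^ ((p - 2) / p) * E ^ (1 / p) := by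
          gcongr
          · exact setIntegral_mul_abs_rpow_nonneg hs.1
          · exact setIntegral_mono_set hint
              ((ae_restrict_mem measurableSet_Ioo).mono fun ξ hξ =>
                mul_nonneg hξ.1.le (Real.rpow_nonneg (abs_nonneg _) _))
              hsub.eventuallyLE
  refine ⟨hestimate, K * E ^ (1 / p),
    mul_nonneg hK (Real.rpow_nonneg (setIntegral_mul_abs_rpow_nonneg le_rfl) _),
    abs_sub_le_mul_abs_sub_rpow_of_le fun s hs t ht hst =>
      (hestimate s hs t ht hst).trans_eq (mul_right_comm _ _ _)⟩

/-- the two-dimensional weighted Hölder estimate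
`|u(t) - u(s)| ≤ ((p-1)/(p-2))^((p-1)/p) (t-s)^((p-2)/p) (∫₀^R ξ|u'(ξ)|^p dξ)^(1/p)`
for `p > 2`, and the resulting Hölder continuity of exponent `(p-2)/p`
(the embedding `W₁^{1,p}(0,R) ↪ C^{(p-2)/p}([0,R])`). -/
theorem stmt17 (R p : ℝ) (hR : 0 < R) (hp : 2 < p)
    (u u' : ℝ → ℝ) (hu : ContinuousOn u (Set.Icc 0 R))
    (hderiv : ∀ ξ ∈ Set.Ioo (0:ℝ) R, HasDerivAt u (u' ξ) ξ)
    (hint : IntegrableOn (fun ξ => ξ * |u' ξ| ^ p) (Set.Ioo 0 R)) :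
    (∀ s ∈ Set.Icc (0:ℝ) R, ∀ t ∈ Set.Icc (0:ℝ) R, s ≤ t →
      |u t - u s| ≤ ((p - 1) / (p - 2)) ^ ((p - 1) / p) * (t - s) ^ ((p - 2) / p) *
        (∫ ξ in Set.Ioo (0:ℝ) R, ξ * |u' ξ| ^ p) ^ (1 / p))
    ∧ ∃ C : ℝ, 0 ≤ C ∧ ∀ s ∈ Set.Icc (0:ℝ) R, ∀ t ∈ Set.Icc (0:ℝ) R,
        |u t - u s| ≤ C * |t - s| ^ ((p - 2) / p) :=
  stmt17_general R p hp u u' hu hderiv hint
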